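/- arXiv:1812.09377 — 2 statements merged into one kernel-verified Lean document; each statement's English description precedes it below -/
import Mathlib

section
/- Let j and n be positive integers with j ≤ n. For every permutation w ∈ 𝔖_n, the alternating sum over all compositions μ of j of (−1)^{ℓ(μ)} ζ^μ(w) equals the alternating sum over all partitions μ of j of (−1)^{ℓ(μ)} η^μ(w); that is, Σ_{μ ⊨ j} (−1)^{ℓ(μ)} ζ^μ(w) = Σ_{μ ⊢ j} (−1)^{ℓ(μ)} η^μ(w). -/
open scoped Classical

/-- A finset `s ⊆ Fin n` is a cycle (orbit) of the permutation `w`;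
fixed points count as cycles of length 1. -/
def IsCycleSetOf {n : ℕ} (w : Equiv.Perm (Fin n)) (s : Finset (Fin n)) : Prop :=
  ∃ x : Fin n, ∀ y : Fin n, y ∈ s ↔ w.SameCycle x y

/-- The finset of cycles (orbits) of `w`, fixed points included as 1-cycles. -/
noncomputable def cyclesOf {n : ℕ} (w : Equiv.Perm (Fin n)) : Finset (Finset (Fin n)) :=
  Finset.univ.filter (IsCycleSetOf w)

/-- `cycCount w i` is `c_i(w)`, the number of cycles of `w` of length `i`. -/
noncomputable def cycCount {n : ℕ} (w : Equiv.Perm (Fin n)) (i : ℕ) : ℕ :=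
  ((cyclesOf w).filter fun s => s.card = i).card

/-- The cycle type of `w` as a multiset, fixed points included as parts equal to 1. -/
noncomputable def fullCycleType {n : ℕ} (w : Equiv.Perm (Fin n)) : Multiset ℕ :=
  (cyclesOf w).val.map Finset.card

/-- `zeta w lam` is `ζ^lam(w)`, the number of ordered brick tilings of the
composition/partition `lam` (given as a list of parts) by `w`:  tuples
`(S_1, …, S_r)` of pairwise disjoint sets of cycles of `w` such that the lengths of the
cycles in `S_j` sum to `lam_j`. -/
noncomputable def zeta {n : ℕ} (w : Equiv.Perm (Fin n)) (lam : List ℕ) : ℕ :=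
  Nat.card {L : Fin lam.length → Finset (Finset (Fin n)) //
    (∀ i, ∀ c ∈ L i, c ∈ cyclesOf w) ∧
    (∀ i j, i ≠ j → Disjoint (L i) (L j)) ∧
    ∀ i, (L i).sum Finset.card = lam.get i}

/-- `xi w mu` is `ξ^mu(w)`, the number of unordered brick tilings of `mu`
(a multiset of parts) by `w`: sets of pairwise disjoint nonempty sets of cycles of `w`
whose multiset of total lengths is `mu`. -/
noncomputable def xi {n : ℕ} (w : Equiv.Perm (Fin n)) (mu : Multiset ℕ) : ℕ :=
  Nat.card {T : Finset (Finset (Finset (Fin n))) //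
    (∀ S ∈ T, ∀ c ∈ S, c ∈ cyclesOf w) ∧
    (∀ S ∈ T, S.Nonempty) ∧
    ((T : Set (Finset (Finset (Fin n)))).Pairwise Disjoint) ∧
    T.val.map (fun S => S.sum Finset.card) = mu}

/-- `eta w mu` is `η^mu(w)`, the number of unordered crackless brick tilings of `mu`
by `w`: sets of distinct cycles of `w` whose multiset of lengths is `mu`. -/
noncomputable def eta {n : ℕ} (w : Equiv.Perm (Fin n)) (mu : Multiset ℕ) : ℕ :=
  Nat.card {T : Finset (Finset (Fin n)) //
    (∀ c ∈ T, c ∈ cyclesOf w) ∧ T.val.map Finset.card = mu}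

/-- The irreducible character value `χ^lam(w)` defined via Frobenius's formula:
the coefficient of `x_1^{lam_1+ℓ-1} ⋯ x_ℓ^{lam_ℓ}` in
`∏_{i<j}(x_i - x_j) · ∏_{cycles c of w} (x_1^{|c|} + ⋯ + x_ℓ^{|c|})`. -/
noncomputable def chiFrob {n : ℕ} (w : Equiv.Perm (Fin n)) (lam : List ℕ) : ℤ :=
  MvPolynomial.coeff
    (Finsupp.equivFunOnFinite.symm fun i : Fin lam.length =>
      lam.get i + (lam.length - 1 - (i : ℕ)))
    ((∏ p ∈ Finset.univ.filter (fun p : Fin lam.length × Fin lam.length => p.1 < p.2),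
        (MvPolynomial.X p.1 - MvPolynomial.X p.2)) *
      ∏ c ∈ cyclesOf w, ∑ i : Fin lam.length,
        (MvPolynomial.X i : MvPolynomial (Fin lam.length) ℤ) ^ c.card)

/-
Both sides equal the signed count `∑ (-1)^|T|` over the sets `T` of cycles of `w` of total
length `j`. For partitions this is just grouping such `T` by their multiset of lengths. For
compositions, an ordered tiling is a tuple of nonempty disjoint sets of cycles; grouping the
tuples by the union `C` of their blocks, `C` contributes `∑_r (-1)^r` times the number of
ordered set partitions of `C` into `r` blocks, and removing the first block gives a recursion
showing that this alternating sum is `(-1)^|C|`.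
-/

open Finset Function

section OrderedSetPartitions

variable {α : Type*} [DecidableEq α]

noncomputable def orderedSetPartitions (r : ℕ) (C : Finset α) : Finset (Fin r → Finset α) :=
  (Fintype.piFinset fun _ => C.powerset).filter fun L =>
    (∀ i, (L i).Nonempty) ∧ Pairwise (Disjoint on L) ∧ univ.biUnion L = C

theorem mem_orderedSetPartitions {r : ℕ} {C : Finset α} {L : Fin r → Finset α} :
    L ∈ orderedSetPartitions r C ↔
      (∀ i, (L i).Nonempty) ∧ Pairwise (Disjoint on L) ∧ univ.biUnion L = C := by
  refine mem_filter.trans (and_iff_right_of_imp ?_)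
  rintro ⟨-, -, rfl⟩
  exact Fintype.mem_piFinset.2 fun i => mem_powerset.2 (subset_biUnion_of_mem L (mem_univ i))

theorem card_orderedSetPartitions_zero (C : Finset α) :
    #(orderedSetPartitions 0 C) = if C = ∅ then 1 else 0 := by
  have : orderedSetPartitions 0 C = if C = ∅ then univ else ∅ := by
    ext L
    split_ifs with hC <;> simp [mem_orderedSetPartitions, hC, eq_comm, eq_iff_true_of_subsingleton]
  split_ifs at this ⊢ <;> simp [this]

theorem biUnion_univ_fin_cons {r : ℕ} (S : Finset α) (M : Fin r → Finset α) :
    univ.biUnion (Fin.cons S M : Fin (r + 1) → Finset α) = S ∪ univ.biUnion M := by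
  ext x
  simp [Fin.exists_fin_succ]

theorem cons_mem_orderedSetPartitions_iff {r : ℕ} {C S : Finset α} {M : Fin r → Finset α} :
    Fin.cons S M ∈ orderedSetPartitions (r + 1) C ↔
      S.Nonempty ∧ S ⊆ C ∧ M ∈ orderedSetPartitions r (C \ S) := by
  simp only [mem_orderedSetPartitions, Fin.forall_fin_succ, Fin.cons_zero, Fin.cons_succ,
    pairwise_fin_succ_iff_of_isSymm, onFun, biUnion_univ_fin_cons]
  constructor
  · rintro ⟨⟨hS, hM⟩, ⟨hdisj, hMdisj⟩, rfl⟩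
    have hSU : Disjoint S (univ.biUnion M) := (disjoint_biUnion_right _ _ _).2 fun i _ => hdisj i
    exact ⟨hS, subset_union_left, hM, hMdisj, (union_sdiff_cancel_left hSU).symm⟩
  · rintro ⟨hS, hSC, hM, hMdisj, hU⟩
    have hdisj := (disjoint_biUnion_right _ _ _).1 (hU ▸ disjoint_sdiff : Disjoint S _)
    exact ⟨⟨hS, hM⟩, ⟨fun i => hdisj i (mem_univ i), hMdisj⟩, by rw [hU, union_sdiff_of_subset hSC]⟩

theorem card_orderedSetPartitions_succ (r : ℕ) (C : Finset α) :
    #(orderedSetPartitions (r + 1) C) =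
      ∑ S ∈ C.powerset.erase ∅, #(orderedSetPartitions r (C \ S)) := by
  rw [← card_sigma]
  refine card_nbij' (fun L => ⟨L 0, Fin.tail L⟩) (fun p => Fin.cons p.1 p.2) ?_ ?_ ?_ ?_
  · intro L hL
    rw [← Fin.cons_self_tail L, mem_coe, cons_mem_orderedSetPartitions_iff] at hL
    obtain ⟨hS, hSC, hM⟩ := hL
    exact mem_sigma.2 ⟨mem_erase.2 ⟨hS.ne_empty, mem_powerset.2 hSC⟩, hM⟩
  · rintro ⟨S, M⟩ h
    obtain ⟨hS, hM⟩ := mem_sigma.1 h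
    obtain ⟨hS, hSC⟩ := mem_erase.1 hS
    exact cons_mem_orderedSetPartitions_iff.2 ⟨nonempty_iff_ne_empty.2 hS, mem_powerset.1 hSC, hM⟩
  · intro L _
    simp
  · rintro ⟨S, M⟩ _
    simp

theorem sum_powerset_erase_empty_neg_one_pow_card_sdiff (C : Finset α) :
    ∑ S ∈ C.powerset.erase ∅, (-1 : ℤ) ^ #(C \ S) = (if C = ∅ then 1 else 0) - (-1) ^ #C := by
  rw [sum_erase_eq_sub (empty_mem_powerset C), sdiff_empty, ← sum_powerset_neg_one_pow_card]
  congr 1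
  refine sum_nbij' (C \ ·) (C \ ·) ?_ ?_ ?_ ?_ fun _ _ => rfl
  all_goals simp +contextual

theorem sum_range_neg_one_pow_mul_card_orderedSetPartitions {m : ℕ} {C : Finset α}
    (hC : #C < m) : ∑ r ∈ range m, (-1 : ℤ) ^ r * #(orderedSetPartitions r C) = (-1) ^ #C := by
  induction m generalizing C with
  | zero => exact absurd hC (Nat.not_lt_zero _)
  | succ m ih =>
    have hsub : ∀ S ∈ C.powerset.erase ∅,
        ∑ r ∈ range m, (-1 : ℤ) ^ r * #(orderedSetPartitions r (C \ S)) = (-1) ^ #(C \ S) := by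
      intro S hS
      obtain ⟨hS, hSC⟩ := mem_erase.1 hS
      refine ih (lt_of_lt_of_le (card_lt_card ?_) (Nat.lt_succ_iff.1 hC))
      exact sdiff_ssubset (mem_powerset.1 hSC) (nonempty_iff_ne_empty.2 hS)
    calc ∑ r ∈ range (m + 1), (-1 : ℤ) ^ r * #(orderedSetPartitions r C)
        = -∑ S ∈ C.powerset.erase ∅,
            ∑ r ∈ range m, (-1 : ℤ) ^ r * #(orderedSetPartitions r (C \ S)) +
          (if C = ∅ then 1 else 0) := by
          simp only [sum_range_succ', card_orderedSetPartitions_succ, pow_succ, Nat.cast_sum,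
            mul_sum, sum_comm (s := range m), ← sum_neg_distrib]
          push_cast [card_orderedSetPartitions_zero]
          rw [one_mul]
          congr 1
          exact sum_congr rfl fun S _ => sum_congr rfl fun r _ => by ring
      _ = (-1) ^ #C := by
          rw [sum_congr rfl hsub, sum_powerset_erase_empty_neg_one_pow_card_sdiff]
          ring

end OrderedSetPartitions

section WeightedTilings

variable {α : Type*} (X : Finset α) (wt : α → ℕ)

noncomputable def orderedTilings (l : List ℕ) : Finset (Fin l.length → Finset α) :=
  (Fintype.piFinset fun _ => X.powerset).filter fun L =>
    Pairwise (Disjoint on L) ∧ ∀ i, ∑ c ∈ L i, wt c = l.get i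

def cracklessTilings (m : Multiset ℕ) : Finset (Finset α) :=
  X.powerset.filter fun T => T.val.map wt = m

def subsetsOfWeight (j : ℕ) : Finset (Finset α) :=
  X.powerset.filter fun T => ∑ c ∈ T, wt c = j

noncomputable def disjointTuples (r j : ℕ) : Finset (Fin r → Finset α) :=
  (Fintype.piFinset fun _ => X.powerset).filter fun L =>
    (∀ i, (L i).Nonempty) ∧ Pairwise (Disjoint on L) ∧ ∑ i, ∑ c ∈ L i, wt c = j

variable {X wt}

theorem card_le_of_mem_subsetsOfWeight (hwt : ∀ c ∈ X, 0 < wt c) {j : ℕ} {T : Finset α}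
    (hT : T ∈ subsetsOfWeight X wt j) : #T ≤ j := by
  obtain ⟨hTX, rfl⟩ := mem_filter.1 hT
  simpa using card_nsmul_le_sum T wt 1 fun c hc => hwt c (mem_powerset.1 hTX hc)

theorem disjointTuples_eq_biUnion [DecidableEq α] (r j : ℕ) :
    disjointTuples X wt r j = (subsetsOfWeight X wt j).biUnion (orderedSetPartitions r) := by
  ext L
  simp only [disjointTuples, subsetsOfWeight, mem_filter, mem_biUnion, Fintype.mem_piFinset,
    mem_powerset, mem_orderedSetPartitions]
  constructor
  · rintro ⟨hX, hne, hdisj, hsum⟩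
    refine ⟨univ.biUnion L, ⟨biUnion_subset.2 fun i _ => hX i, ?_⟩, hne, hdisj, rfl⟩
    rwa [sum_biUnion fun i _ k _ hik => hdisj hik]
  · rintro ⟨C, ⟨hCX, hCwt⟩, hne, hdisj, rfl⟩
    refine ⟨fun i => (subset_biUnion_of_mem L (mem_univ i)).trans hCX, hne, hdisj, ?_⟩
    rwa [← sum_biUnion fun i _ k _ hik => hdisj hik]

theorem card_disjointTuples [DecidableEq α] (r j : ℕ) :
    #(disjointTuples X wt r j) = ∑ C ∈ subsetsOfWeight X wt j, #(orderedSetPartitions r C) := by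
  rw [disjointTuples_eq_biUnion, card_biUnion]
  intro C _ C' _ hCC'
  refine disjoint_left.2 fun L hL hL' => hCC' ?_
  exact (mem_orderedSetPartitions.1 hL).2.2.symm.trans (mem_orderedSetPartitions.1 hL').2.2

theorem sum_card_orderedTilings_eq_card_disjointTuples (hwt : ∀ c ∈ X, 0 < wt c) (r j : ℕ) :
    ∑ μ ∈ univ.filter (fun μ : Composition j => μ.length = r), #(orderedTilings X wt μ.blocks) =
      #(disjointTuples X wt r j) := by
  set profile : (Fin r → Finset α) → List ℕ := fun L => List.ofFn fun i => ∑ c ∈ L i, wt c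
  rw [card_eq_sum_card_fiberwise (f := profile)
    (t := (univ.filter (fun μ : Composition j => μ.length = r)).image Composition.blocks),
    sum_image fun μ _ μ' _ h => Composition.ext h]
  · refine sum_congr rfl fun μ hμ => ?_
    obtain rfl : μ.length = r := (mem_filter.1 hμ).2
    congr 1
    ext L
    have hprofile : profile L = μ.blocks ↔ ∀ i, ∑ c ∈ L i, wt c = μ.blocks.get i := by
      rw [← funext_iff, ← List.ofFn_inj, List.ofFn_get]
    simp only [orderedTilings, disjointTuples, mem_filter, hprofile]
    constructor
    · rintro ⟨hX, hdisj, hw⟩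
      refine ⟨⟨hX, fun i => ?_, hdisj, ?_⟩, hw⟩
      · exact nonempty_of_sum_ne_zero ((hw i).trans_ne (μ.blocks_pos (List.get_mem _ _)).ne')
      · simp [hw]
    · rintro ⟨⟨hX, -, hdisj, -⟩, hw⟩
      exact ⟨hX, hdisj, hw⟩
  · intro L hL
    obtain ⟨hX, hne, -, hsum⟩ := mem_filter.1 hL
    have hpos : ∀ k ∈ profile L, 0 < k := by
      simp only [profile, List.mem_ofFn, forall_exists_index]
      rintro k i rfl
      exact sum_pos (fun c hc => hwt c (mem_powerset.1 (Fintype.mem_piFinset.1 hX i) hc)) (hne i)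
    refine mem_image.2 ⟨⟨profile L, hpos _, by simpa [profile, List.sum_ofFn] using hsum⟩, ?_, rfl⟩
    simp [Composition.length, profile]

theorem sum_compositions_neg_one_pow_mul_card_orderedTilings [DecidableEq α]
    (hwt : ∀ c ∈ X, 0 < wt c) (j : ℕ) :
    ∑ μ : Composition j, (-1 : ℤ) ^ μ.length * #(orderedTilings X wt μ.blocks) =
      ∑ T ∈ subsetsOfWeight X wt j, (-1 : ℤ) ^ #T := by
  calc ∑ μ : Composition j, (-1 : ℤ) ^ μ.length * #(orderedTilings X wt μ.blocks)
      = ∑ r ∈ range (j + 1), (-1 : ℤ) ^ r * #(disjointTuples X wt r j) := by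
        rw [← sum_fiberwise_of_maps_to fun μ _ => mem_range.2 (Nat.lt_succ_of_le μ.length_le)]
        refine sum_congr rfl fun r _ => ?_
        rw [← sum_card_orderedTilings_eq_card_disjointTuples hwt, Nat.cast_sum, mul_sum]
        exact sum_congr rfl fun μ hμ => by rw [(mem_filter.1 hμ).2]
    _ = ∑ T ∈ subsetsOfWeight X wt j,
          ∑ r ∈ range (j + 1), (-1 : ℤ) ^ r * #(orderedSetPartitions r T) := by
        simp only [card_disjointTuples, Nat.cast_sum, mul_sum]
        exact sum_comm
    _ = ∑ T ∈ subsetsOfWeight X wt j, (-1 : ℤ) ^ #T :=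
        sum_congr rfl fun T hT => sum_range_neg_one_pow_mul_card_orderedSetPartitions
          (Nat.lt_succ_of_le (card_le_of_mem_subsetsOfWeight hwt hT))

theorem sum_partitions_neg_one_pow_mul_card_cracklessTilings (hwt : ∀ c ∈ X, 0 < wt c) (j : ℕ) :
    ∑ μ : Nat.Partition j, (-1 : ℤ) ^ Multiset.card μ.parts * #(cracklessTilings X wt μ.parts) =
      ∑ T ∈ subsetsOfWeight X wt j, (-1 : ℤ) ^ #T := by
  symm
  rw [← sum_fiberwise_of_maps_to (g := fun T : Finset α => T.val.map wt)
    (t := univ.image Nat.Partition.parts), sum_image fun μ _ μ' _ h => Nat.Partition.ext h]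
  · refine sum_congr rfl fun μ _ => ?_
    have hfiber : (subsetsOfWeight X wt j).filter (fun T => T.val.map wt = μ.parts) =
        cracklessTilings X wt μ.parts := by
      ext T
      simp only [subsetsOfWeight, cracklessTilings, mem_filter]
      refine ⟨fun ⟨⟨hX, _⟩, hT⟩ => ⟨hX, hT⟩, fun ⟨hX, hT⟩ => ⟨⟨hX, ?_⟩, hT⟩⟩
      rw [sum_eq_multiset_sum, hT, μ.parts_sum]
    have hcard : ∀ T ∈ cracklessTilings X wt μ.parts, #T = Multiset.card μ.parts := fun T hT => by
      rw [← (mem_filter.1 hT).2, Multiset.card_map, card_val]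
    rw [hfiber, sum_congr rfl fun T hT => by rw [hcard T hT], sum_const, nsmul_eq_mul, mul_comm]
  · intro T hT
    obtain ⟨hTX, hTj⟩ := mem_filter.1 hT
    refine mem_image.2 ⟨⟨T.val.map wt, fun hk => ?_, ?_⟩, mem_univ _, rfl⟩
    · obtain ⟨c, hc, rfl⟩ := Multiset.mem_map.1 hk
      exact hwt c (mem_powerset.1 hTX hc)
    · rw [← hTj, sum_eq_multiset_sum]

end WeightedTilings

section Cycles

variable {n : ℕ} (w : Equiv.Perm (Fin n))

theorem card_pos_of_mem_cyclesOf {c : Finset (Fin n)} (hc : c ∈ cyclesOf w) : 0 < #c := by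
  obtain ⟨x, hx⟩ := (mem_filter.1 hc).2
  exact card_pos.2 ⟨x, (hx x).2 (Equiv.Perm.SameCycle.refl w x)⟩

theorem zeta_eq_card_orderedTilings (l : List ℕ) :
    zeta w l = #(orderedTilings (cyclesOf w) Finset.card l) := by
  rw [zeta, Nat.card_eq_fintype_card, Fintype.card_subtype]
  congr 1
  ext L
  rw [orderedTilings, mem_filter, mem_filter]
  simp [Finset.subset_iff, Pairwise, onFun]

theorem eta_eq_card_cracklessTilings (m : Multiset ℕ) :
    eta w m = #(cracklessTilings (cyclesOf w) Finset.card m) := by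
  rw [eta, Nat.card_eq_fintype_card, Fintype.card_subtype]
  congr 1
  ext T
  simp [cracklessTilings, Finset.subset_iff]

end Cycles

theorem stmt0_general (j n : ℕ) (w : Equiv.Perm (Fin n)) :
    ∑ μ : Composition j, (-1 : ℤ) ^ μ.length * zeta w μ.blocks =
      ∑ μ : Nat.Partition j, (-1 : ℤ) ^ Multiset.card μ.parts * eta w μ.parts := by
  simp only [zeta_eq_card_orderedTilings, eta_eq_card_cracklessTilings]
  rw [sum_compositions_neg_one_pow_mul_card_orderedTilings fun _ => card_pos_of_mem_cyclesOf w,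
    sum_partitions_neg_one_pow_mul_card_cracklessTilings fun _ => card_pos_of_mem_cyclesOf w]

theorem stmt0 (j n : ℕ) (hj : 0 < j) (hn : 0 < n) (hjn : j ≤ n) (w : Equiv.Perm (Fin n)) :
    ∑ μ : Composition j, (-1 : ℤ) ^ μ.length * zeta w μ.blocks =
      ∑ μ : Nat.Partition j, (-1 : ℤ) ^ Multiset.card μ.parts * eta w μ.parts :=
  stmt0_general j n w
end

section
/- Let j ≤ n be positive integers and w ∈ 𝔖_n. In the tiling poset Til(w; j), every interval of rank 2 contains exactly two intermediate elements: for all tilings A'' < A in Til(w; j) such that some A' satisfies A'' ⋖ A' ⋖ A, the number of A' with A'' ⋖ A' ⋖ A is exactly 2. Consequently, the 𝔽_2-linear map ∂ sending the basis vector e_A to Σ_{A' ⋖ A} e_{A'} satisfies ∂ ∘ ∂ = 0, so (C_•, ∂) is a chain complex over 𝔽_2. -/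
open scoped Classical

/-- An element of the tiling poset `Til(w; j)`: an ordered brick tiling, by `w`,
of some composition of `j`, encoded as the list of its rows (each row being the
set of cycles of `w` tiling it). -/
def IsTiling {n : ℕ} (w : Equiv.Perm (Fin n)) (j : ℕ)
    (L : List (Finset (Finset (Fin n)))) : Prop :=
  (∀ S ∈ L, ∀ c ∈ S, c ∈ cyclesOf w) ∧
  List.Pairwise Disjoint L ∧
  (∀ S ∈ L, 0 < S.sum Finset.card) ∧
  (L.map fun S => S.sum Finset.card).sum = j

/-- The covering relation of the tiling poset: `A` covers `A'` when `A` is obtained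
from `A'` by merging two adjacent rows. -/
def TilCov {n : ℕ} (A' A : List (Finset (Finset (Fin n)))) : Prop :=
  ∃ t : ℕ, t + 1 < A'.length ∧
    A = A'.take t ++ (A'.getD t ∅ ∪ A'.getD (t + 1) ∅) :: A'.drop (t + 2)


/-!
A tiling covers `A'` when it arises from `A'` by merging two adjacent rows (`mergeRows`). Two
successive merges of `A''` can always be written as merging at `u` and then at `v` with `u ≤ v`,
and `mergeRows_comm` shows that merging at `v + 1` and then at `u` gives the same result: these
are the two intermediate tilings. Because the rows of a tiling are nonempty and pairwise
disjoint, the first row where a double merge differs from `A''` recovers `u`, and then `v`, so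
there are no others and the two are distinct. The coefficient of `e_{A''}` in `∂ ∂ e_A` counts
these intermediates, so it is `0` or `2`, hence `0` in `𝔽_2`.
-/

section MergeRows

variable {β : Type*}

def IsOrderedPartition (L : List (Finset β)) : Prop :=
  (∀ S ∈ L, S.Nonempty) ∧ L.Pairwise Disjoint

theorem IsOrderedPartition.of_cons {L : List (Finset β)} {a : Finset β}
    (hL : IsOrderedPartition (a :: L)) : IsOrderedPartition L :=
  ⟨fun S hS => hL.1 S (List.mem_cons_of_mem a hS), (List.pairwise_cons.mp hL.2).2⟩

variable [DecidableEq β]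

/-- `mergeRows L t` replaces rows `t` and `t + 1` of `L` by their union; it is the identity
when `t + 1 ≥ L.length`. -/
def mergeRows : List (Finset β) → ℕ → List (Finset β)
  | a :: l, t + 1 => a :: mergeRows l t
  | a :: b :: l, 0 => (a ∪ b) :: l
  | l, _ => l

def MergeCovBy (L A : List (Finset β)) : Prop :=
  ∃ t, t + 1 < L.length ∧ A = mergeRows L t

@[simp]
theorem mergeRows_cons_cons_zero (a b : Finset β) (l : List (Finset β)) :
    mergeRows (a :: b :: l) 0 = (a ∪ b) :: l := rfl

@[simp]
theorem mergeRows_cons_succ (a : Finset β) (l : List (Finset β)) (t : ℕ) :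
    mergeRows (a :: l) (t + 1) = a :: mergeRows l t := rfl

theorem mergeRows_eq_take_append_drop {L : List (Finset β)} {t : ℕ} (ht : t + 1 < L.length) :
    mergeRows L t = L.take t ++ (L.getD t ∅ ∪ L.getD (t + 1) ∅) :: L.drop (t + 2) := by
  induction L generalizing t with
  | nil => simp at ht
  | cons a l ih =>
    match t, l with
    | 0, b :: l => rfl
    | t + 1, l => simp [ih (by simpa using ht)]

theorem length_mergeRows {L : List (Finset β)} {t : ℕ} (ht : t + 1 < L.length) :
    (mergeRows L t).length + 1 = L.length := by
  rw [mergeRows_eq_take_append_drop ht]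
  simp only [List.length_append, List.length_take, List.length_cons, List.length_drop]
  omega

theorem mergeRows_comm {L : List (Finset β)} {t s : ℕ} (hts : t ≤ s) (hs : s + 2 < L.length) :
    mergeRows (mergeRows L (s + 1)) t = mergeRows (mergeRows L t) s := by
  induction L generalizing t s with
  | nil => simp at hs
  | cons a l ih =>
    match t, s, l with
    | 0, 0, b :: c :: l => simp [Finset.union_assoc]
    | 0, s + 1, b :: c :: l => rfl
    | t + 1, s + 1, l => simp [ih (by omega : t ≤ s) (by simp at hs; omega)]

theorem exists_subset_of_mem_mergeRows {L : List (Finset β)} {t : ℕ} {S : Finset β}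
    (hS : S ∈ mergeRows L t) : ∃ S' ∈ L, S' ⊆ S := by
  induction L generalizing t with
  | nil => cases t <;> exact absurd hS (by simp [mergeRows])
  | cons a l ih =>
    match t, l with
    | t + 1, l =>
      obtain rfl | hS := List.mem_cons.mp hS
      · exact ⟨S, by simp, subset_rfl⟩
      · obtain ⟨S', hS', h⟩ := ih hS
        exact ⟨S', List.mem_cons_of_mem a hS', h⟩
    | 0, b :: l =>
      obtain rfl | hS := List.mem_cons.mp hS
      · exact ⟨a, by simp, Finset.subset_union_left⟩
      · exact ⟨S, by simp [hS], subset_rfl⟩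
    | 0, [] => exact ⟨S, hS, subset_rfl⟩

theorem exists_mem_of_mem_mergeRows {L : List (Finset β)} {t : ℕ} {S : Finset β}
    (hS : S ∈ mergeRows L t) {x : β} (hx : x ∈ S) : ∃ S' ∈ L, x ∈ S' := by
  induction L generalizing t with
  | nil => cases t <;> exact absurd hS (by simp [mergeRows])
  | cons a l ih =>
    match t, l with
    | t + 1, l =>
      obtain rfl | hS := List.mem_cons.mp hS
      · exact ⟨S, by simp, hx⟩
      · obtain ⟨S', hS', h⟩ := ih hS
        exact ⟨S', List.mem_cons_of_mem a hS', h⟩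
    | 0, b :: l =>
      obtain rfl | hS := List.mem_cons.mp hS
      · obtain hx | hx := Finset.mem_union.mp hx
        exacts [⟨a, by simp, hx⟩, ⟨b, by simp, hx⟩]
      · exact ⟨S, by simp [hS], hx⟩
    | 0, [] => exact ⟨S, hS, hx⟩

theorem pairwise_disjoint_mergeRows {L : List (Finset β)} (hL : L.Pairwise Disjoint) (t : ℕ) :
    (mergeRows L t).Pairwise Disjoint := by
  induction L generalizing t with
  | nil => cases t <;> exact hL
  | cons a l ih =>
    match t, l with
    | t + 1, l =>
      rw [List.pairwise_cons] at hL
      refine List.pairwise_cons.mpr ⟨fun S hS => ?_, ih hL.2 t⟩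
      refine Finset.disjoint_left.mpr fun x hxa hxS => ?_
      obtain ⟨S', hS', hxS'⟩ := exists_mem_of_mem_mergeRows hS hxS
      exact Finset.disjoint_left.mp (hL.1 S' hS') hxa hxS'
    | 0, b :: l =>
      simp only [mergeRows_cons_cons_zero, List.pairwise_cons, List.mem_cons,
        forall_eq_or_imp] at hL ⊢
      exact ⟨fun S hS => Finset.disjoint_union_left.mpr ⟨hL.1.2 S hS, hL.2.1 S hS⟩, hL.2.2⟩
    | 0, [] => exact hL

theorem sum_map_sum_mergeRows {M : Type*} [AddCommMonoid M] (g : β → M)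
    {L : List (Finset β)} (hL : L.Pairwise Disjoint) (t : ℕ) :
    ((mergeRows L t).map (·.sum g)).sum = (L.map (·.sum g)).sum := by
  induction L generalizing t with
  | nil => cases t <;> rfl
  | cons a l ih =>
    match t, l with
    | t + 1, l => simp [ih (List.pairwise_cons.mp hL).2]
    | 0, b :: l =>
      have hab : Disjoint a b := (List.pairwise_cons.mp hL).1 b (by simp)
      simp [Finset.sum_union hab, add_assoc]
    | 0, [] => rfl

theorem subset_headD_mergeRows (a : Finset β) (l : List (Finset β)) (t : ℕ) :
    a ⊆ (mergeRows (a :: l) t).headD ∅ := by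
  match t, l with
  | t + 1, l => exact subset_rfl
  | 0, b :: l => exact Finset.subset_union_left
  | 0, [] => exact subset_rfl

theorem MergeCovBy.exists_mergeRows_mergeRows {L X A : List (Finset β)} (h₁ : MergeCovBy L X)
    (h₂ : MergeCovBy X A) :
    ∃ u v, u ≤ v ∧ v + 2 < L.length ∧ (X = mergeRows L u ∨ X = mergeRows L (v + 1)) ∧
      A = mergeRows (mergeRows L u) v := by
  obtain ⟨s, hs, rfl⟩ := h₁
  obtain ⟨t, ht, rfl⟩ := h₂
  have hlen := length_mergeRows hs
  rcases le_or_gt s t with hst | hts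
  · exact ⟨s, t, hst, by omega, .inl rfl, rfl⟩
  · obtain ⟨s, rfl⟩ : ∃ s', s = s' + 1 := ⟨s - 1, by omega⟩
    exact ⟨t, s, by omega, by omega, .inr rfl, mergeRows_comm (by omega) (by omega)⟩

theorem isOrderedPartition_mergeRows {L : List (Finset β)} (hL : IsOrderedPartition L) (t : ℕ) :
    IsOrderedPartition (mergeRows L t) :=
  ⟨fun S hS => by
    obtain ⟨S', hS', h⟩ := exists_subset_of_mem_mergeRows hS
    exact (hL.1 S' hS').mono h,
   pairwise_disjoint_mergeRows hL.2 t⟩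

namespace IsOrderedPartition

variable {L : List (Finset β)}

theorem not_union_subset_left {a b : Finset β} (hL : IsOrderedPartition (a :: b :: L)) :
    ¬ a ∪ b ⊆ a := fun h =>
  (hL.1 b (by simp)).ne_empty <|
    Disjoint.eq_bot_of_ge ((List.pairwise_cons.mp hL.2).1 b (by simp))
      (Finset.union_subset_iff.mp h).2

theorem mergeRows_injOn {s t : ℕ} (hL : IsOrderedPartition L) (hs : s + 1 < L.length)
    (ht : t + 1 < L.length) (h : mergeRows L s = mergeRows L t) : s = t := by
  induction L generalizing s t with
  | nil => simp at hs
  | cons a l ih =>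
    match s, t, l with
    | 0, 0, _ => rfl
    | s + 1, t + 1, l =>
      simp only [List.length_cons, mergeRows_cons_succ, List.cons.injEq, true_and] at hs ht h
      rw [ih hL.of_cons (by omega) (by omega) h]
    | 0, t + 1, b :: l =>
      exact absurd (List.cons.inj h).1.subset hL.not_union_subset_left
    | s + 1, 0, b :: l =>
      exact absurd (List.cons.inj h.symm).1.subset hL.not_union_subset_left
    | 0, _ + 1, [] | _ + 1, 0, [] => simp at hs ht

theorem mergeRows_mergeRows_injOn {u v u' v' : ℕ} (hL : IsOrderedPartition L)
    (huv : u ≤ v) (hv : v + 2 < L.length) (huv' : u' ≤ v') (hv' : v' + 2 < L.length)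
    (h : mergeRows (mergeRows L u) v = mergeRows (mergeRows L u') v') :
    u = u' ∧ v = v' := by
  induction L generalizing u v u' v' with
  | nil => simp at hv
  | cons a l ih =>
    match u, u', v, v', l with
    | 0, 0, v, v', l =>
      have hlen := length_mergeRows (L := a :: l) (t := 0) (by omega)
      exact ⟨rfl, (isOrderedPartition_mergeRows hL 0).mergeRows_injOn (by omega) (by omega) h⟩
    | u + 1, u' + 1, v + 1, v' + 1, l =>
      simp only [List.length_cons, mergeRows_cons_succ, List.cons.injEq, true_and] at hv hv' h
      obtain ⟨rfl, rfl⟩ := ih hL.of_cons (by omega) (by omega) (by omega) (by omega) h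
      exact ⟨rfl, rfl⟩
    | 0, u' + 1, v, v' + 1, b :: l =>
      have hhead := subset_headD_mergeRows (a ∪ b) l v
      rw [mergeRows_cons_cons_zero] at h
      rw [h, mergeRows_cons_succ] at hhead
      exact absurd hhead hL.not_union_subset_left
    | u + 1, 0, v + 1, v', b :: l =>
      have hhead := subset_headD_mergeRows (a ∪ b) l v'
      rw [mergeRows_cons_cons_zero] at h
      rw [← h, mergeRows_cons_succ] at hhead
      exact absurd hhead hL.not_union_subset_left
    | _ + 1, _, 0, _, _ | _, _ + 1, _, 0, _ => omega
    | 0, _ + 1, _, _ + 1, [] | _ + 1, 0, _ + 1, _, [] => simp at hv hv'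

theorem mergeCovBy_and_mergeCovBy_iff {u v : ℕ} {X : List (Finset β)} (hL : IsOrderedPartition L)
    (huv : u ≤ v) (hv : v + 2 < L.length) :
    MergeCovBy L X ∧ MergeCovBy X (mergeRows (mergeRows L u) v) ↔
      X = mergeRows L u ∨ X = mergeRows L (v + 1) := by
  constructor
  · rintro ⟨h₁, h₂⟩
    obtain ⟨u', v', huv', hv', hX, hA⟩ := h₁.exists_mergeRows_mergeRows h₂
    obtain ⟨rfl, rfl⟩ := hL.mergeRows_mergeRows_injOn huv hv huv' hv' hA
    exact hX
  · have hlen := length_mergeRows (L := L) (t := u) (by omega)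
    have hlen' := length_mergeRows (L := L) (t := v + 1) hv
    rintro (rfl | rfl)
    · exact ⟨⟨u, by omega, rfl⟩, ⟨v, by omega, rfl⟩⟩
    · exact ⟨⟨v + 1, hv, rfl⟩, ⟨u, by omega, (mergeRows_comm huv hv).symm⟩⟩

end IsOrderedPartition

end MergeRows

section Tiling

variable {n j : ℕ} {w : Equiv.Perm (Fin n)} {L : List (Finset (Finset (Fin n)))}

theorem tilCov_iff_mergeCovBy {A' A : List (Finset (Finset (Fin n)))} :
    TilCov A' A ↔ MergeCovBy A' A :=
  exists_congr fun _ => and_congr_right fun ht => by rw [mergeRows_eq_take_append_drop ht]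

theorem IsTiling.isOrderedPartition (hL : IsTiling w j L) : IsOrderedPartition L :=
  ⟨fun S hS => Finset.nonempty_of_sum_ne_zero (hL.2.2.1 S hS).ne', hL.2.1⟩

theorem isTiling_mergeRows (hL : IsTiling w j L) (t : ℕ) : IsTiling w j (mergeRows L t) := by
  refine ⟨fun S hS c hc => ?_, pairwise_disjoint_mergeRows hL.2.1 t, fun S hS => ?_,
    (sum_map_sum_mergeRows _ hL.2.1 t).trans hL.2.2.2⟩
  · obtain ⟨S', hS', hcS'⟩ := exists_mem_of_mem_mergeRows hS hc
    exact hL.1 S' hS' c hcS'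
  · obtain ⟨S', hS', hS'S⟩ := exists_subset_of_mem_mergeRows hS
    exact (hL.2.2.1 S' hS').trans_le (Finset.sum_le_sum_of_subset hS'S)

theorem card_tilings_between_eq_two {A : List (Finset (Finset (Fin n)))} (hL : IsTiling w j L)
    (hA : ∃ A', IsTiling w j A' ∧ TilCov L A' ∧ TilCov A' A) :
    Nat.card {A' // IsTiling w j A' ∧ TilCov L A' ∧ TilCov A' A} = 2 := by
  obtain ⟨A', -, h₁, h₂⟩ := hA
  rw [tilCov_iff_mergeCovBy] at h₁ h₂
  obtain ⟨u, v, huv, hv, -, rfl⟩ := h₁.exists_mergeRows_mergeRows h₂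
  have hbetween (X) : IsTiling w j X ∧ TilCov L X ∧ TilCov X (mergeRows (mergeRows L u) v) ↔
      X ∈ ({mergeRows L u, mergeRows L (v + 1)} : Set _) := by
    rw [tilCov_iff_mergeCovBy, tilCov_iff_mergeCovBy,
      hL.isOrderedPartition.mergeCovBy_and_mergeCovBy_iff huv hv]
    refine ⟨And.right, fun hX => ⟨?_, hX⟩⟩
    rcases hX with rfl | rfl <;> exact isTiling_mergeRows hL _
  have hne : mergeRows L u ≠ mergeRows L (v + 1) := fun h => by
    have := hL.isOrderedPartition.mergeRows_injOn (by omega) hv h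
    omega
  rw [Nat.card_congr (Equiv.subtypeEquivRight hbetween), Nat.card_coe_set_eq, Set.ncard_pair hne]

end Tiling

theorem LinearMap.apply_apply_single_eq_card {X K : Type*} [Semiring K] [Nontrivial K]
    (D : (X →₀ K) →ₗ[K] (X →₀ K)) (P : X → Prop) (R : X → X → Prop)
    (hD : ∀ a, P a → ∀ b, D (Finsupp.single a 1) b = if P b ∧ R b a then 1 else 0)
    {a : X} (ha : P a) (c : X) :
    D (D (Finsupp.single a 1)) c = Nat.card {b // P c ∧ P b ∧ R c b ∧ R b a} := by
  set f := D (Finsupp.single a 1)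
  have hsupp (b) : b ∈ f.support ↔ P b ∧ R b a := by simp [f, hD a ha]
  have hterm (b) (hb : b ∈ f.support) :
      D (Finsupp.single b (f b)) c = if P c ∧ R c b then 1 else 0 := by
    obtain ⟨hb, hba⟩ := (hsupp b).mp hb
    rw [show f b = 1 by simp [f, hD a ha, hb, hba], hD b hb]
  conv_lhs => rw [← Finsupp.sum_single f, map_finsuppSum, Finsupp.sum_apply]
  rw [Finsupp.sum, Finset.sum_congr rfl hterm, Finset.sum_boole, ← Nat.card_eq_finsetCard]
  congr 1
  refine Nat.card_congr (Equiv.subtypeEquivRight fun b => ?_)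
  rw [Finset.mem_filter, hsupp]
  tauto

theorem stmt17_general (n j : ℕ) (w : Equiv.Perm (Fin n)) :
    (∀ A'' A : List (Finset (Finset (Fin n))),
        IsTiling w j A'' → IsTiling w j A →
        (∃ A', IsTiling w j A' ∧ TilCov A'' A' ∧ TilCov A' A) →
        Nat.card {A' : List (Finset (Finset (Fin n))) //
          IsTiling w j A' ∧ TilCov A'' A' ∧ TilCov A' A} = 2) ∧
      ∀ D : (List (Finset (Finset (Fin n))) →₀ ZMod 2) →ₗ[ZMod 2]
          (List (Finset (Finset (Fin n))) →₀ ZMod 2),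
        (∀ A, IsTiling w j A → ∀ A',
          D (Finsupp.single A 1) A' = if IsTiling w j A' ∧ TilCov A' A then 1 else 0) →
        ∀ A, IsTiling w j A → D (D (Finsupp.single A 1)) = 0 := by
  refine ⟨fun A'' A hA'' _ hA => card_tilings_between_eq_two hA'' hA, fun D hD A hA => ?_⟩
  ext A''
  rw [LinearMap.apply_apply_single_eq_card D _ _ hD hA, Finsupp.coe_zero, Pi.zero_apply]
  by_cases hbetween : ∃ A', IsTiling w j A'' ∧ IsTiling w j A' ∧ TilCov A'' A' ∧ TilCov A' A
  · obtain ⟨A', hA'', hA'⟩ := hbetween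
    simp only [hA'', true_and]
    rw [card_tilings_between_eq_two hA'' ⟨A', hA'⟩]
    rfl
  · have : IsEmpty _ := (isEmpty_subtype _).mpr fun A' hA' => hbetween ⟨A', hA'⟩
    rw [Nat.card_of_isEmpty, Nat.cast_zero]

theorem stmt17 (n j : ℕ) (hj : 0 < j) (hjn : j ≤ n) (w : Equiv.Perm (Fin n)) :
    (∀ A'' A : List (Finset (Finset (Fin n))),
        IsTiling w j A'' → IsTiling w j A →
        (∃ A', IsTiling w j A' ∧ TilCov A'' A' ∧ TilCov A' A) →
        Nat.card {A' : List (Finset (Finset (Fin n))) //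
          IsTiling w j A' ∧ TilCov A'' A' ∧ TilCov A' A} = 2) ∧
      ∀ D : (List (Finset (Finset (Fin n))) →₀ ZMod 2) →ₗ[ZMod 2]
          (List (Finset (Finset (Fin n))) →₀ ZMod 2),
        (∀ A, IsTiling w j A → ∀ A',
          D (Finsupp.single A 1) A' = if IsTiling w j A' ∧ TilCov A' A then 1 else 0) →
        ∀ A, IsTiling w j A → D (D (Finsupp.single A 1)) = 0 :=
  stmt17_general n j w
end
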